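/- arXiv:1909.05955 — 2 statements merged into one kernel-verified Lean document; each statement's English description precedes it below -/
import Mathlib

section
/- Let G be a group satisfying: (i) x⁴ = 1 for all x, (ii) G is metabelian (γ₂(G) is abelian), (iii) G is nilpotent of class at most 4. Then for every h ∈ γ₂(G), h² ∈ γ₄(G). -/
/-!
Modulo `γ₄` the group has class at most `3`: there `γ₃` is central and, by the three subgroups
lemma, `γ₂` is abelian, so it suffices that every commutator `c` squares to `1`. Collecting
`(x * y) ^ 4` with `c` the commutator of `x` and `y` gives `x⁴ y⁴ c⁶ u⁴ v¹⁴` with central `u`, `v`;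
the same collection for the class-two pair `(y, c)`, whose commutator is `v`, gives `v⁶ = 1`.
Exponent `4` then forces `v² = 1` and `c² = c⁶ = 1`.
-/

open scoped commutatorElement

open Subgroup

section

variable {G : Type*} [Group G]

theorem mul_pow_four_of_commutator_relations {x y c u v : G} (hyx : y * x = x * y * c)
    (hcx : c * x = x * c * u) (hcy : c * y = y * c * v)
    (hu : ∀ g, Commute u g) (hv : ∀ g, Commute v g) :
    (x * y) ^ 4 = x ^ 4 * y ^ 4 * c ^ 6 * u ^ 4 * v ^ 14 := by
  have right {a b d : G} (h : a * b = d) (t : G) : a * (b * t) = d * t := by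
    rw [← mul_assoc, h]
  -- the relations, oriented left to right, collect any word into the order `x, y, c, u, v`
  simp only [pow_succ, pow_zero, one_mul, mul_assoc, right hyx, right hcx, right hcy, hcy,
    right (hu x).eq, right (hu y).eq, right (hu c).eq, (hv y).eq,
    right (hv x).eq, right (hv y).eq, right (hv c).eq, right (hv u).eq]

theorem sq_eq_one_of_mul_eq_mul_mul_of_central (hexp : ∀ g : G, g ^ 4 = 1) {x y c : G}
    (hyx : y * x = x * y * c) (hc : ∀ g, Commute c g) : c ^ 2 = 1 := by
  have h := mul_pow_four_of_commutator_relations hyx ((hc x).eq.trans (mul_one _).symm)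
    ((hc y).eq.trans (mul_one _).symm) Commute.one_left Commute.one_left
  simp only [hexp, one_pow, one_mul, mul_one] at h
  exact pow_gcd_eq_one.mpr ⟨hexp c, h.symm⟩

theorem commute_of_mem_lowerCentralSeries {n : ℕ}
    (hG : (⊤ : Subgroup G).lowerCentralSeries (n + 1) = ⊥) {g : G}
    (hg : g ∈ (⊤ : Subgroup G).lowerCentralSeries n) (x : G) : Commute g x := by
  have h : ⁅g, x⁆ ∈ (⊤ : Subgroup G).lowerCentralSeries (n + 1) :=
    commutator_mem_commutator hg (mem_top x)
  rw [hG, mem_bot] at h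
  exact commutatorElement_eq_one_iff_commute.mp h

theorem commute_of_mem_lowerCentralSeries_one (hG : (⊤ : Subgroup G).lowerCentralSeries 3 = ⊥)
    {a b : G} (ha : a ∈ (⊤ : Subgroup G).lowerCentralSeries 1)
    (hb : b ∈ (⊤ : Subgroup G).lowerCentralSeries 1) : Commute a b := by
  have h : ⁅⁅(⊤ : Subgroup G), ⊤⁆, (⊤ : Subgroup G).lowerCentralSeries 1⁆ = ⊥ :=
    commutator_commutator_eq_bot_of_rotate (by rwa [commutator_comm ⊤]) hG
  exact (commutator_eq_bot_iff_le_centralizer.mp h ha b hb).symm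

theorem sq_commutatorElement_eq_one (hexp : ∀ g : G, g ^ 4 = 1)
    (hG : (⊤ : Subgroup G).lowerCentralSeries 3 = ⊥) (a b : G) : ⁅a, b⁆ ^ 2 = 1 := by
  have central (z : G) : ∀ g, Commute ⁅⁅a, b⁆⁻¹, z⁆ g :=
    commute_of_mem_lowerCentralSeries hG <| commutator_mem_commutator
      (inv_mem (commutator_mem_commutator (mem_top a) (mem_top b))) (mem_top z)
  have hv : ⁅⁅a, b⁆⁻¹, a⁆ ^ 2 = 1 :=
    sq_eq_one_of_mul_eq_mul_mul_of_central hexp (x := a⁻¹) (y := ⁅a, b⁆) (by group) (central a)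
  have h := mul_pow_four_of_commutator_relations (x := b⁻¹) (y := a⁻¹) (c := ⁅a, b⁆)
    (by group) (by group) (by group) (central b) (central a)
  rw [show 14 = 2 * 7 by rfl, pow_mul, hv] at h
  simp only [hexp, one_pow, one_mul, mul_one] at h
  exact pow_gcd_eq_one.mpr ⟨hexp _, h.symm⟩

theorem sq_eq_one_of_mem_lowerCentralSeries_one (hexp : ∀ g : G, g ^ 4 = 1)
    (hG : (⊤ : Subgroup G).lowerCentralSeries 3 = ⊥) {k : G}
    (hk : k ∈ (⊤ : Subgroup G).lowerCentralSeries 1) : k ^ 2 = 1 := by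
  rw [top_lowerCentralSeries_one, commutator_eq_closure] at hk
  induction hk using closure_induction with
  | mem _ h =>
    obtain ⟨a, b, rfl⟩ := h
    exact sq_commutatorElement_eq_one hexp hG a b
  | one => exact one_pow 2
  | mul p q hp hq hp2 hq2 =>
    rw [← commutator_eq_closure] at hp hq
    rw [(commute_of_mem_lowerCentralSeries_one hG hp hq).mul_pow, hp2, hq2, one_mul]
  | inv p _ hp2 => rw [inv_pow, hp2, inv_one]

theorem lowerCentralSeries_quotient_eq_map (N : Subgroup G) [N.Normal] (n : ℕ) :
    (⊤ : Subgroup (G ⧸ N)).lowerCentralSeries n =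
      ((⊤ : Subgroup G).lowerCentralSeries n).map (QuotientGroup.mk' N) := by
  rw [map_lowerCentralSeries, map_top_of_surjective _ (QuotientGroup.mk'_surjective N)]

end

theorem sq_of_gamma2_mem_gamma4_general {G : Type*} [Group G]
    (hexp : ∀ x : G, x ^ 4 = 1) :
    ∀ h ∈ Subgroup.lowerCentralSeries (⊤ : Subgroup G) 1, h ^ 2 ∈ Subgroup.lowerCentralSeries (⊤ : Subgroup G) 3 := by
  intro h hh
  set N := (⊤ : Subgroup G).lowerCentralSeries 3
  have hexpQ (x : G ⧸ N) : x ^ 4 = 1 := by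
    induction x using QuotientGroup.induction_on with
    | H z => rw [← QuotientGroup.mk_pow, hexp, QuotientGroup.mk_one]
  have hQ : (⊤ : Subgroup (G ⧸ N)).lowerCentralSeries 3 = ⊥ := by
    rw [lowerCentralSeries_quotient_eq_map, Subgroup.map_eq_bot_iff, QuotientGroup.ker_mk']
  have hhQ : (h : G ⧸ N) ^ 2 = 1 :=
    sq_eq_one_of_mem_lowerCentralSeries_one hexpQ hQ
      ((lowerCentralSeries_quotient_eq_map N 1).symm ▸ mem_map_of_mem _ hh)
  rwa [← QuotientGroup.mk_pow, QuotientGroup.eq_one_iff] at hhQ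

theorem sq_of_gamma2_mem_gamma4 {G : Type*} [Group G]
    (hexp : ∀ x : G, x ^ 4 = 1)
    (hmet : ∀ a ∈ Subgroup.lowerCentralSeries (⊤ : Subgroup G) 1, ∀ b ∈ Subgroup.lowerCentralSeries (⊤ : Subgroup G) 1, a * b = b * a)
    (hnil : Subgroup.lowerCentralSeries (⊤ : Subgroup G) 4 = ⊥) :
    ∀ h ∈ Subgroup.lowerCentralSeries (⊤ : Subgroup G) 1, h ^ 2 ∈ Subgroup.lowerCentralSeries (⊤ : Subgroup G) 3 :=
  sq_of_gamma2_mem_gamma4_general hexp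
end

section
/- Let G be a group of exponent dividing 4, metabelian, and nilpotent of class at most 4. Then for all a, b ∈ G: (a⁻¹, b)² = (a,b)² and (a, b⁻¹)² = (a,b)². -/
/-!
Squares of commutators are central. Let `c ∈ γ₂(G)` and `g ∈ G`, and let `φ` be conjugation
by `g` on the abelian group `γ₂(G)`, written additively. With `d = [g, c]` and `e = [g, d]` we
have `φ c = c + d`, `φ d = d + e` and `φ e = e` (as `[g, e] ∈ γ₅(G) = 1`). Expanding
`(c g)⁴ = g⁴ = 1` gives `c + φ c + φ² c + φ³ c = 4c + 6d + 4e = 0`, so `2d = 0` because the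
exponent divides 4, and then `φ (2c) = 2c`. Finally `(a⁻¹, b)` and `(a, b⁻¹)` are conjugates of
`(a, b)⁻¹`, whose square is `(a, b)⁻² = (a, b)²`.
-/

/-- The commutator `(a,b) = a⁻¹ * b⁻¹ * a * b` used in the paper. -/
def paperComm {G : Type*} [Group G] (a b : G) : G := a⁻¹ * b⁻¹ * a * b

open Subgroup
open scoped commutatorElement

section CommGroup

variable {A : Type*} [CommGroup A]

theorem map_sq_eq_sq_of_mul_map_eq_one (hexp : ∀ y : A, y ^ 4 = 1) (φ : A →* A) {x d e : A}
    (hx : φ x = d * x) (hd : φ d = e * d) (he : φ e = e)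
    (hnorm : x * φ x * φ (φ x) * φ (φ (φ x)) = 1) : φ (x ^ 2) = x ^ 2 := by
  have hd6 : d ^ 6 = 1 := by
    have h : x ^ 4 * d ^ 6 * e ^ 4 = 1 := by
      rw [← hnorm]
      simp only [hx, hd, he, map_mul, pow_succ, pow_zero, one_mul]
      ac_rfl
    rwa [hexp, hexp, one_mul, mul_one] at h
  have hd2 : d ^ 2 = 1 := by
    calc d ^ 2 = d ^ 2 * d ^ 4 := by rw [hexp, mul_one]
      _ = 1 := by rw [← pow_add, hd6]
  rw [map_pow, hx, mul_pow, hd2, one_mul]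

end CommGroup

section Group

variable {G : Type*} [Group G]

theorem paperComm_eq_commutatorElement (a b : G) : paperComm a b = ⁅a⁻¹, b⁻¹⁆ := by
  simp only [paperComm, commutatorElement_def, inv_inv]

theorem paperComm_mem_commutator (a b : G) : paperComm a b ∈ commutator G := by
  rw [paperComm_eq_commutatorElement]
  exact commutator_mem_commutator (mem_top _) (mem_top _)

theorem paperComm_inv_left (a b : G) : paperComm a⁻¹ b = a * (paperComm a b)⁻¹ * a⁻¹ := by
  simp only [paperComm]
  group

theorem paperComm_inv_right (a b : G) : paperComm a b⁻¹ = b * (paperComm a b)⁻¹ * b⁻¹ := by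
  simp only [paperComm]
  group

theorem commutatorElement_mem_lowerCentralSeries_succ {n : ℕ} {x : G}
    (hx : x ∈ (⊤ : Subgroup G).lowerCentralSeries n) (g : G) :
    ⁅g, x⁆ ∈ (⊤ : Subgroup G).lowerCentralSeries (n + 1) := by
  rw [← commutatorElement_inv]
  exact inv_mem (commutator_mem_commutator hx (mem_top g))

theorem conj_inv_sq_eq_sq {z : G} (hz : z ^ 2 ∈ center G) (hz4 : z ^ 4 = 1) (h : G) :
    (h * z⁻¹ * h⁻¹) ^ 2 = z ^ 2 :=
  calc (h * z⁻¹ * h⁻¹) ^ 2 = h * (z ^ 2)⁻¹ * h⁻¹ := by rw [pow_two, pow_two]; group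
    _ = (z ^ 2)⁻¹ := by rw [mem_center_iff.mp (inv_mem hz) h, mul_inv_cancel_right]
    _ = z ^ 2 := inv_eq_of_mul_eq_one_right (by rw [← pow_add, hz4])

open scoped IsMulCommutative in
theorem sq_mem_center_of_mem_commutator (hexp : ∀ x : G, x ^ 4 = 1)
    (hmet : ∀ a ∈ (⊤ : Subgroup G).lowerCentralSeries 1,
      ∀ b ∈ (⊤ : Subgroup G).lowerCentralSeries 1, a * b = b * a)
    (hnil : (⊤ : Subgroup G).lowerCentralSeries 4 = ⊥) {c : G}
    (hc : c ∈ (⊤ : Subgroup G).lowerCentralSeries 1) : c ^ 2 ∈ center G := by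
  set A := (⊤ : Subgroup G).lowerCentralSeries 1
  have : IsMulCommutative A := ⟨⟨fun x y => Subtype.ext (hmet _ x.2 _ y.2)⟩⟩
  have hexpA : ∀ y : A, y ^ 4 = 1 := fun y => Subtype.ext (by simpa using hexp y)
  refine mem_center_iff.mpr fun g => ?_
  have hd := commutatorElement_mem_lowerCentralSeries_succ hc g
  have he := commutatorElement_mem_lowerCentralSeries_succ hd g
  have hge : g * ⁅g, ⁅g, c⁆⁆ = ⁅g, ⁅g, c⁆⁆ * g := by
    rw [← commutatorElement_eq_one_iff_mul_comm, ← mem_bot, ← hnil]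
    exact commutatorElement_mem_lowerCentralSeries_succ he g
  let φ : A →* A := (MulAut.conjNormal g : MulAut A).toMonoidHom
  have hφ (y : A) : (φ y : G) = g * y * g⁻¹ := MulAut.conjNormal_apply g y
  obtain ⟨x, rfl⟩ : ∃ x : A, (x : G) = c := ⟨⟨c, hc⟩, rfl⟩
  have hnorm : x * φ x * φ (φ x) * φ (φ (φ x)) = 1 := Subtype.ext <| by
    simp only [hφ, coe_mul, OneMemClass.coe_one]
    calc _ = ((x : G) * g) ^ 4 * (g ^ 4)⁻¹ := by simp only [pow_succ, pow_zero, one_mul]; group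
      _ = 1 := by rw [hexp, hexp, inv_one, one_mul]
  have hconj : φ (x ^ 2) = x ^ 2 := map_sq_eq_sq_of_mul_map_eq_one hexpA φ
    (d := ⟨_, Subgroup.lowerCentralSeries_antitone _ (by norm_num) hd⟩)
    (e := ⟨_, Subgroup.lowerCentralSeries_antitone _ (by norm_num) he⟩)
    (Subtype.ext (by simp only [hφ, coe_mul, commutatorElement_def]; group))
    (Subtype.ext (by simp only [hφ, coe_mul, commutatorElement_def]; group))
    (Subtype.ext (by rw [hφ, hge, mul_inv_cancel_right]))
    hnorm
  have h := congrArg Subtype.val hconj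
  rw [hφ, SubmonoidClass.coe_pow] at h
  exact (eq_mul_inv_iff_mul_eq.mp h.symm).symm

end Group

theorem comm_sq_inv {G : Type*} [Group G]
    (hexp : ∀ x : G, x ^ 4 = 1)
    (hmet : ∀ a ∈ (⊤ : Subgroup G).lowerCentralSeries 1, ∀ b ∈ (⊤ : Subgroup G).lowerCentralSeries 1, a * b = b * a)
    (hnil : (⊤ : Subgroup G).lowerCentralSeries 4 = ⊥) (a b : G) :
    (paperComm a⁻¹ b) ^ 2 = (paperComm a b) ^ 2 ∧
    (paperComm a b⁻¹) ^ 2 = (paperComm a b) ^ 2 := by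
  have hcentral := sq_mem_center_of_mem_commutator hexp hmet hnil (paperComm_mem_commutator a b)
  rw [paperComm_inv_left, paperComm_inv_right]
  exact ⟨conj_inv_sq_eq_sq hcentral (hexp _) a, conj_inv_sq_eq_sq hcentral (hexp _) b⟩
end
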